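/- arXiv:2604.21531 — 9 statements merged into one kernel-verified Lean document; each statement's English description precedes it below -/
import Mathlib

section
/- Let q, d, ℓ be positive integers with ℓ ≥ 2 and q ≥ d + 2. Define NUR(d,ℓ,q) as the set of d×ℓ matrices M over [q] such that NOT all columns of M consist of d distinct elements with all columns having the same set of elements. Then an OR relation of arity d·ℓ is definable from NUR(d,ℓ,q): there exist a matrix α ∈ [q]^{d×ℓ} and elements β_{i,j} ∈ [q] with β_{i,j} ≠ α_{i,j} for all (i,j), such that every matrix M with M_{i,j} ∈ {α_{i,j}, β_{i,j}} for all (i,j) belongs to NUR(d,ℓ,q), except M = α itself. -/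
/-
Take `α` with every column equal to `(0, 1, …, d-1)` and let `β` put the value `d` in the
even columns and `d + 1` in the odd ones. Flipping any entry of `α` to `β` places a value
in some column that no entry of a column of the other parity can take, so the columns can
no longer share the same set of entries.
-/

/-- A `d × l` matrix over `Fin q` is uniformly rainbow if each column has pairwise
distinct entries and all columns have the same set of entries. `NUR` is its complement. -/
def UniformlyRainbow {d l q : ℕ} (M : Fin d → Fin l → Fin q) : Prop :=
  (∀ j, Function.Injective fun i => M i j) ∧
  ∀ j j' : Fin l, (Finset.univ.image fun i => M i j) = Finset.univ.image fun i => M i j'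

section UniformlyRainbow

variable {d l q : ℕ}

theorem uniformlyRainbow_of_injective {c : Fin d → Fin q} (hc : Function.Injective c) :
    UniformlyRainbow fun i (_ : Fin l) => c i :=
  ⟨fun _ => hc, fun _ _ => rfl⟩

theorem UniformlyRainbow.exists_eq_in_column {M : Fin d → Fin l → Fin q}
    (hM : UniformlyRainbow M) (i : Fin d) (j j' : Fin l) : ∃ i', M i' j' = M i j := by
  have hmem : M i j ∈ Finset.univ.image fun i => M i j :=
    Finset.mem_image_of_mem _ (Finset.mem_univ i)
  rw [hM.2 j j'] at hmem
  simpa using hmem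

theorem not_uniformlyRainbow_iff_ne {α β M : Fin d → Fin l → Fin q}
    (hα : UniformlyRainbow α)
    (hβ : ∀ i j, ∃ j', ∀ i', α i' j' ≠ β i j ∧ β i' j' ≠ β i j)
    (hM : ∀ i j, M i j = α i j ∨ M i j = β i j) :
    ¬ UniformlyRainbow M ↔ M ≠ α := by
  refine ⟨fun hR hMα => hR (hMα ▸ hα), fun hMα hR => ?_⟩
  obtain ⟨i, j, hij⟩ : ∃ i j, M i j = β i j := by
    by_contra! h
    exact hMα (funext₂ fun i j => (hM i j).resolve_right (h i j))
  obtain ⟨j', hj'⟩ := hβ i j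
  obtain ⟨i', hi'⟩ := hR.exists_eq_in_column i j j'
  rw [hij] at hi'
  rcases hM i' j' with h | h
  · exact (hj' i').1 (h ▸ hi')
  · exact (hj' i').2 (h ▸ hi')

end UniformlyRainbow

theorem Fin.exists_mod_two_ne {l : ℕ} (hl : 2 ≤ l) (j : Fin l) :
    ∃ j' : Fin l, j'.val % 2 ≠ j.val % 2 :=
  ⟨⟨(j.val + 1) % 2, by omega⟩, by simp only; omega⟩

theorem stmt0_general (d l q : ℕ) (hl : 2 ≤ l) (hq : d + 2 ≤ q) :
    ∃ α β : Fin d → Fin l → Fin q,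
      (∀ i j, β i j ≠ α i j) ∧
      ∀ M : Fin d → Fin l → Fin q,
        (∀ i j, M i j = α i j ∨ M i j = β i j) →
        (¬ UniformlyRainbow M ↔ M ≠ α) := by
  let α : Fin d → Fin l → Fin q := fun i _ => Fin.castLE (by omega) i
  let β : Fin d → Fin l → Fin q := fun _ j => ⟨d + j.val % 2, by omega⟩
  have hβα : ∀ i j, β i j ≠ α i j := fun i j h => by
    have := congrArg Fin.val h
    simp only [α, β, Fin.val_castLE] at this
    omega
  have hβ : ∀ i j, ∃ j', ∀ i', α i' j' ≠ β i j ∧ β i' j' ≠ β i j := fun i j => by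
    obtain ⟨j', hj'⟩ := Fin.exists_mod_two_ne hl j
    refine ⟨j', fun i' => ⟨fun h => ?_, fun h => ?_⟩⟩ <;>
      · have := congrArg Fin.val h
        simp only [α, β, Fin.val_castLE] at this
        omega
  exact ⟨α, β, hβα, fun M hM =>
    not_uniformlyRainbow_iff_ne (uniformlyRainbow_of_injective (Fin.castLE_injective _)) hβ hM⟩

/-- If `l ≥ 2` and `q ≥ d + 2`, an OR relation of arity `d·l` is definable from
`NUR(d,l,q)`: there are matrices `α` and entrywise-different `β` so that every matrix
with entries chosen from `{α, β}` is not uniformly rainbow, except `α` itself. -/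
theorem stmt0 (d l q : ℕ) (hd : 0 < d) (hl : 2 ≤ l) (hq : d + 2 ≤ q) :
    ∃ α β : Fin d → Fin l → Fin q,
      (∀ i j, β i j ≠ α i j) ∧
      ∀ M : Fin d → Fin l → Fin q,
        (∀ i j, M i j = α i j ∨ M i j = β i j) →
        (¬ UniformlyRainbow M ↔ M ≠ α) :=
  stmt0_general d l q hl hq
end

section
/- Let q, d, ℓ be positive integers with q ≥ d + 1. Then an OR relation of arity d·ℓ − 1 is definable from NUR(d,ℓ,q). Concretely, taking α ∈ [q]^{d×ℓ} with α_{i,j} = i, J = ([d]×[ℓ]) \ {(1,1)}, β_{1,j} = d+1 for j ≥ 2, and β_{i,j} = 1 for i ≥ 2: every matrix M with M_{1,1} = 1, M_{i,j} ∈ {α_{i,j}, β_{i,j}} for (i,j) ∈ J, and M ≠ α, fails to be uniformly rainbow (i.e., belongs to NUR(d,ℓ,q)), while α itself is uniformly rainbow. -/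
/-
`α` has the same injective column everywhere. Conversely, if `M` is uniformly
rainbow, then its first column only takes values of `α`, hence so does every column; so the
first row never takes the value `d + 1` and is constantly `1`, and by injectivity of the
columns no other row can take the value `1` either, which forces `M = α`.
-/

theorem uniformlyRainbow_const_of_injective {d l q : ℕ} {a : Fin d → Fin q}
    (ha : Function.Injective a) :
    UniformlyRainbow (fun i (_ : Fin l) => a i) :=
  ⟨fun _ => ha, fun _ _ => rfl⟩

namespace UniformlyRainbow

variable {d l q : ℕ} {M : Fin d → Fin l → Fin q}

theorem exists_eq (hM : UniformlyRainbow M) (i : Fin d) (j j' : Fin l) :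
    ∃ i', M i' j' = M i j := by
  have hmem : M i j ∈ Finset.univ.image fun i => M i j :=
    Finset.mem_image_of_mem _ (Finset.mem_univ i)
  rw [hM.2 j j'] at hmem
  simpa using hmem

theorem eq_const_of_mem_pair (hM : UniformlyRainbow M) {a : Fin d → Fin q} {b : Fin q}
    (hb : b ∉ Set.range a) (i₀ : Fin d) (j₀ : Fin l) (h₀ : M i₀ j₀ = a i₀)
    (hrow : ∀ j, j ≠ j₀ → M i₀ j = a i₀ ∨ M i₀ j = b)
    (hother : ∀ i, i ≠ i₀ → ∀ j, M i j = a i ∨ M i j = a i₀) :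
    M = fun i _ => a i := by
  have hcol₀ : ∀ i, M i j₀ ∈ Set.range a := by
    intro i
    by_cases hi : i = i₀
    · exact hi ▸ ⟨i₀, h₀.symm⟩
    · rcases hother i hi j₀ with h | h
      · exact ⟨i, h.symm⟩
      · exact ⟨i₀, h.symm⟩
  have hrange : ∀ i j, M i j ∈ Set.range a := by
    intro i j
    obtain ⟨i', hi'⟩ := hM.exists_eq i j j₀
    exact hi' ▸ hcol₀ i'
  have hrow₀ : ∀ j, M i₀ j = a i₀ := by
    intro j
    by_cases hj : j = j₀
    · exact hj ▸ h₀
    · exact (hrow j hj).resolve_right fun h => hb (h ▸ hrange i₀ j)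
  funext i j
  by_cases hi : i = i₀
  · exact hi ▸ hrow₀ j
  · refine (hother i hi j).resolve_right fun h => hi ?_
    exact hM.1 j (show M i j = M i₀ j by rw [h, hrow₀])

end UniformlyRainbow

/-- For `q ≥ d + 1`, an OR relation of arity `d·l − 1` is definable from `NUR(d,l,q)`,
witnessed by `α i j = i`, `J = ([d]×[l]) \ {(1,1)}`, `β` equal to `d+1` on the first row
and `1` elsewhere (0-indexed: `⟨d,_⟩` and `0`). -/
theorem stmt1 (d l q : ℕ) (hd : 0 < d) (hl : 0 < l) (hq : d + 1 ≤ q) :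
    let α : Fin d → Fin l → Fin q := fun i _ => Fin.castLE (by omega) i
    UniformlyRainbow α ∧
    ∀ M : Fin d → Fin l → Fin q,
      M ⟨0, hd⟩ ⟨0, hl⟩ = α ⟨0, hd⟩ ⟨0, hl⟩ →
      (∀ i j, (i, j) ≠ ((⟨0, hd⟩ : Fin d), (⟨0, hl⟩ : Fin l)) →
        M i j = α i j ∨
          M i j = (if (i : ℕ) = 0 then (⟨d, by omega⟩ : Fin q) else ⟨0, by omega⟩)) →
      M ≠ α → ¬ UniformlyRainbow M := by
  intro α
  refine ⟨uniformlyRainbow_const_of_injective (Fin.castLE_injective _), ?_⟩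
  intro M h₀ hβ hne hM
  have hd_notMem :
      (⟨d, by omega⟩ : Fin q) ∉ Set.range (Fin.castLE (by omega) : Fin d → Fin q) := by
    rintro ⟨i, hi⟩
    exact absurd (congrArg Fin.val hi) (by simp [i.isLt.ne])
  refine hne (hM.eq_const_of_mem_pair hd_notMem ⟨0, hd⟩ ⟨0, hl⟩ h₀ (fun j hj => ?_) ?_)
  · have h := hβ ⟨0, hd⟩ j (by simp [hj])
    rwa [if_pos rfl] at h
  · intro i hi j
    have h := hβ i j (by simp [hi])
    rwa [if_neg fun h => hi (Fin.ext h)] at h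
end

section
/- Let q, d, ℓ be positive integers with q ≥ d. Then an OR relation of arity (d−1)·ℓ is definable from NUR(d,ℓ,q). Concretely, with α_{i,j} = i for all (i,j) ∈ [d]×[ℓ], J = ([d]\{1}) × [ℓ], and β_{i,j} = 1 for all (i,j) ∈ J: every matrix M with M_{1,j} = 1 for all j, M_{i,j} ∈ {i, 1} for all (i,j) ∈ J, and M ≠ α, belongs to NUR(d,ℓ,q), while α is uniformly rainbow. -/
namespace UniformlyRainbow

variable {d l q : ℕ}

theorem of_injective_const_columns {c : Fin d → Fin q} (hc : Function.Injective c) :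
    UniformlyRainbow fun i (_ : Fin l) => c i :=
  ⟨fun _ => hc, fun _ _ => rfl⟩

theorem not_of_eq_in_column {M : Fin d → Fin l → Fin q} {i i' : Fin d} {j : Fin l}
    (hii' : i ≠ i') (h : M i j = M i' j) : ¬ UniformlyRainbow M :=
  fun hM => hii' (hM.1 j h)

end UniformlyRainbow

/-- For `q ≥ d`, an OR relation of arity `(d−1)·l` is definable from `NUR(d,l,q)`,
witnessed by `α i j = i`, `J = ([d]\{1}) × [l]`, `β = 1` on `J` (0-indexed: `0`). -/
theorem stmt2 (d l q : ℕ) (hd : 0 < d) (hq : d ≤ q) :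
    let α : Fin d → Fin l → Fin q := fun i _ => Fin.castLE hq i
    UniformlyRainbow α ∧
    ∀ M : Fin d → Fin l → Fin q,
      (∀ j, M ⟨0, hd⟩ j = α ⟨0, hd⟩ j) →
      (∀ (i : Fin d) (j : Fin l), (i : ℕ) ≠ 0 → M i j = α i j ∨ M i j = (⟨0, by omega⟩ : Fin q)) →
      M ≠ α → ¬ UniformlyRainbow M := by
  intro α
  refine ⟨UniformlyRainbow.of_injective_const_columns (Fin.castLE_injective hq),
    fun M hrow0 hentries hne => ?_⟩
  obtain ⟨i, j, hij⟩ : ∃ i j, M i j ≠ α i j := by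
    by_contra! h
    exact hne (funext₂ h)
  have hi : (i : ℕ) ≠ 0 := by
    rintro hi
    obtain rfl : i = ⟨0, hd⟩ := Fin.ext hi
    exact hij (hrow0 j)
  have hi0 : i ≠ ⟨0, hd⟩ := Fin.ne_of_val_ne hi
  refine UniformlyRainbow.not_of_eq_in_column (j := j) hi0 ?_
  rw [(hentries i j hi).resolve_left hij, hrow0 j]
  rfl
end

section
/- Let q ≥ 3 be an integer, let G = (V,E) be a graph with list function L : V → P([q]), let u₁, u₂ ∈ V be distinct vertices, let α ∈ [q], and let β, γ be distinct elements of [q] \ {α}. Form a graph G' by adding three new vertices v₁, v₂, v₃ forming a path u₁-v₁-v₂-v₃-u₂, and extend L by L'(v₁) = {α, β}, L'(v₂) = {β, γ}, L'(v₃) = {α, γ}. Then for every proper list-coloring c of (G, L), c can be extended to a proper list-coloring of (G', L') if and only if (c(u₁), c(u₂)) ≠ (α, α). -/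
/-!
The inner vertices of the path are forced when `c u₁ = α`: `v₁ = β`, hence `v₂ = γ`, hence
`v₃ = α`, which clashes with `c u₂ = α`. In every other case the path is colored `α, β, γ`
(if `c u₂ = α`) or `x, γ, α` with `x ∈ {α, β} \ {c u₁}`.
-/

def ProperListColoring {V : Type*} {q : ℕ} (G : SimpleGraph V) (L : V → Set (Fin q))
    (c : V → Fin q) : Prop :=
  (∀ v, c v ∈ L v) ∧ ∀ u v, G.Adj u v → c u ≠ c v

theorem exists_pathGadget_coloring_iff {K : Type*} {α β γ a b : K} (hβγ : β ≠ γ)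
    (hβα : β ≠ α) (hγα : γ ≠ α) :
    (∃ x ∈ ({α, β} : Set K), ∃ y ∈ ({β, γ} : Set K), ∃ z ∈ ({α, γ} : Set K),
      a ≠ x ∧ x ≠ y ∧ y ≠ z ∧ z ≠ b) ↔ (a, b) ≠ (α, α) := by
  constructor
  · rintro ⟨x, hx, y, hy, z, hz, hax, hxy, hyz, hzb⟩ hab
    obtain ⟨ha, hb⟩ := Prod.mk.inj hab
    obtain rfl : x = β := Or.resolve_left hx (ha ▸ hax).symm
    obtain rfl : y = γ := Or.resolve_left hy hxy.symm
    obtain rfl : z = α := Or.resolve_right hz hyz.symm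
    exact hzb hb.symm
  · intro hab
    rcases eq_or_ne b α with rfl | hb
    · exact ⟨b, by simp, β, by simp, γ, by simp, fun h => hab (by rw [h]), hβα.symm, hβγ, hγα⟩
    rcases eq_or_ne a α with rfl | ha
    · exact ⟨β, by simp, γ, by simp, a, by simp, hβα.symm, hβγ, hγα, hb.symm⟩
    · exact ⟨α, by simp, γ, by simp, α, by simp, ha, hγα.symm, hγα, hb.symm⟩

namespace SimpleGraph

variable {V : Type*} {q : ℕ}

def attachPath3 (G : SimpleGraph V) (u₁ u₂ : V) : SimpleGraph (V ⊕ Fin 3) :=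
  fromEdgeSet ((Sym2.map Sum.inl '' G.edgeSet) ∪
    {s(Sum.inl u₁, Sum.inr 0), s(Sum.inr 0, Sum.inr 1), s(Sum.inr 1, Sum.inr 2),
      s(Sum.inr 2, Sum.inl u₂)})

theorem image_sym2Map_inl_edgeSet {W : Type*} (G : SimpleGraph V) :
    Sym2.map (Sum.inl : V → V ⊕ W) '' G.edgeSet =
      (G.map (Function.Embedding.inl : V ↪ V ⊕ W)).edgeSet := by
  rw [edgeSet_map]; rfl

variable {G : SimpleGraph V} {u₁ u₂ : V}

@[simp]
theorem attachPath3_adj_inl_inl {x y : V} :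
    (G.attachPath3 u₁ u₂).Adj (Sum.inl x) (Sum.inl y) ↔ G.Adj x y := by
  simpa [attachPath3, image_sym2Map_inl_edgeSet] using fun h => h.ne

@[simp]
theorem attachPath3_adj_inl_inr {x : V} {i : Fin 3} :
    (G.attachPath3 u₁ u₂).Adj (Sum.inl x) (Sum.inr i) ↔
      x = u₁ ∧ i = 0 ∨ x = u₂ ∧ i = 2 := by
  simp [attachPath3, image_sym2Map_inl_edgeSet]

@[simp]
theorem attachPath3_adj_inr_inr {i j : Fin 3} :
    (G.attachPath3 u₁ u₂).Adj (Sum.inr i) (Sum.inr j) ↔ (pathGraph 3).Adj i j := by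
  fin_cases i <;> fin_cases j <;> simp [attachPath3, image_sym2Map_inl_edgeSet, pathGraph_adj]

@[simp]
theorem attachPath3_adj_inr_inl {x : V} {i : Fin 3} :
    (G.attachPath3 u₁ u₂).Adj (Sum.inr i) (Sum.inl x) ↔
      x = u₁ ∧ i = 0 ∨ x = u₂ ∧ i = 2 := by
  rw [adj_comm, attachPath3_adj_inl_inr]

theorem properListColoring_attachPath3_iff {L : V → Set (Fin q)} {M : Fin 3 → Set (Fin q)}
    {c : V ⊕ Fin 3 → Fin q} :
    ProperListColoring (G.attachPath3 u₁ u₂) (Sum.elim L M) c ↔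
      ProperListColoring G L (c ∘ Sum.inl) ∧ (∀ i, c (Sum.inr i) ∈ M i) ∧
        c (Sum.inl u₁) ≠ c (Sum.inr 0) ∧ c (Sum.inr 0) ≠ c (Sum.inr 1) ∧
        c (Sum.inr 1) ≠ c (Sum.inr 2) ∧ c (Sum.inr 2) ≠ c (Sum.inl u₂) := by
  constructor
  · rintro ⟨hL, hadj⟩
    exact ⟨⟨fun v => hL (.inl v), fun x y h => hadj _ _ (by simpa)⟩, fun i => hL (.inr i),
      hadj _ _ (by simp), hadj _ _ (by simp [pathGraph_adj]), hadj _ _ (by simp [pathGraph_adj]),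
      hadj _ _ (by simp)⟩
  · rintro ⟨⟨hL, hG⟩, hM, h₀, h₁, h₂, h₃⟩
    refine ⟨Sum.rec hL hM, ?_⟩
    rintro (x | i) (y | j) hadj
    · exact hG x y (by simpa using hadj)
    · obtain ⟨rfl, rfl⟩ | ⟨rfl, rfl⟩ := attachPath3_adj_inl_inr.1 hadj
      exacts [h₀, h₃.symm]
    · obtain ⟨rfl, rfl⟩ | ⟨rfl, rfl⟩ := attachPath3_adj_inr_inl.1 hadj
      exacts [h₀.symm, h₃]
    · rw [attachPath3_adj_inr_inr, pathGraph_adj] at hadj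
      fin_cases i <;> fin_cases j <;>
        first | exact absurd hadj (by decide) | assumption | exact Ne.symm ‹_›

theorem exists_extension_attachPath3_iff {L : V → Set (Fin q)} {M : Fin 3 → Set (Fin q)}
    {c : V → Fin q} (hc : ProperListColoring G L c) :
    (∃ c' : V ⊕ Fin 3 → Fin q,
        ProperListColoring (G.attachPath3 u₁ u₂) (Sum.elim L M) c' ∧ ∀ v, c' (Sum.inl v) = c v) ↔
      ∃ x ∈ M 0, ∃ y ∈ M 1, ∃ z ∈ M 2, c u₁ ≠ x ∧ x ≠ y ∧ y ≠ z ∧ z ≠ c u₂ := by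
  simp only [properListColoring_attachPath3_iff]
  constructor
  · rintro ⟨c', ⟨-, hM, h₀, h₁, h₂, h₃⟩, hext⟩
    rw [hext] at h₀ h₃
    exact ⟨_, hM 0, _, hM 1, _, hM 2, h₀, h₁, h₂, h₃⟩
  · rintro ⟨x, hx, y, hy, z, hz, h₀, h₁, h₂, h₃⟩
    refine ⟨Sum.elim c ![x, y, z], ⟨hc, ?_, h₀, h₁, h₂, h₃⟩, fun _ => rfl⟩
    intro i
    fin_cases i <;> assumption

end SimpleGraph

theorem stmt5_general {V : Type*} (q : ℕ) (G : SimpleGraph V) (L : V → Set (Fin q))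
    (u₁ u₂ : V) (α β γ : Fin q) (hβγ : β ≠ γ)
    (hβα : β ≠ α) (hγα : γ ≠ α) :
    let G' : SimpleGraph (V ⊕ Fin 3) := SimpleGraph.fromEdgeSet
      ((Sym2.map Sum.inl '' G.edgeSet) ∪
        {s(Sum.inl u₁, Sum.inr 0), s(Sum.inr 0, Sum.inr 1), s(Sum.inr 1, Sum.inr 2),
          s(Sum.inr 2, Sum.inl u₂)})
    let L' : V ⊕ Fin 3 → Set (Fin q) :=
      Sum.elim L fun i => if i = 0 then {α, β} else if i = 1 then {β, γ} else {α, γ}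
    ∀ c : V → Fin q, ProperListColoring G L c →
      ((∃ c' : V ⊕ Fin 3 → Fin q,
          ProperListColoring G' L' c' ∧ ∀ v, c' (Sum.inl v) = c v) ↔
        (c u₁, c u₂) ≠ (α, α)) := by
  intro G' L' c hc
  exact (SimpleGraph.exists_extension_attachPath3_iff hc).trans
    (exists_pathGadget_coloring_iff hβγ hβα hγα)

/-- Gadget for equal forbidden colors: adding a path `u₁ - v₁ - v₂ - v₃ - u₂` with lists
`{α,β}`, `{β,γ}`, `{α,γ}` forbids exactly the color pair `(α, α)` on `(u₁, u₂)`. -/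
theorem stmt5 {V : Type*} (q : ℕ) (hq : 3 ≤ q) (G : SimpleGraph V) (L : V → Set (Fin q))
    (u₁ u₂ : V) (hu : u₁ ≠ u₂) (α β γ : Fin q) (hβγ : β ≠ γ)
    (hβα : β ≠ α) (hγα : γ ≠ α) :
    let G' : SimpleGraph (V ⊕ Fin 3) := SimpleGraph.fromEdgeSet
      ((Sym2.map Sum.inl '' G.edgeSet) ∪
        {s(Sum.inl u₁, Sum.inr 0), s(Sum.inr 0, Sum.inr 1), s(Sum.inr 1, Sum.inr 2),
          s(Sum.inr 2, Sum.inl u₂)})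
    let L' : V ⊕ Fin 3 → Set (Fin q) :=
      Sum.elim L fun i => if i = 0 then {α, β} else if i = 1 then {β, γ} else {α, γ}
    ∀ c : V → Fin q, ProperListColoring G L c →
      ((∃ c' : V ⊕ Fin 3 → Fin q,
          ProperListColoring G' L' c' ∧ ∀ v, c' (Sum.inl v) = c v) ↔
        (c u₁, c u₂) ≠ (α, α)) :=
  stmt5_general q G L u₁ u₂ α β γ hβγ hβα hγα
end

section
/- Let q ≥ 1 and t ≤ q be positive integers. Let G = (V,E) be a graph and X ⊆ V a set such that G \ X is a disjoint union of cliques, each of size at most t. Let F be the collection of all tuples (F₁,...,F_ℓ) of (q−ℓ+1)-subsets of X, over integers ℓ ∈ [t], such that there exists a clique {v₁,...,v_ℓ} in G \ X with F_i ⊆ N_G(v_i) for all i ∈ [ℓ]. Then for every proper coloring c : X → [q] of G[X], c extends to a proper coloring of G with q colors if and only if no tuple in F is uniformly rainbow with respect to c. -/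
/-- A tuple of vertex sets is uniformly rainbow w.r.t. a coloring `c` if each set is
rainbow and all sets receive the same set of colors. -/
def URTuple {V : Type*} [DecidableEq V] {q : ℕ} (c : V → Fin q) {l : ℕ}
    (F : Fin l → Finset V) : Prop :=
  (∀ i, Set.InjOn c ↑(F i)) ∧ ∀ i j, (F i).image c = (F j).image c

/-- If `G \ X` is a disjoint union of cliques of size at most `t ≤ q`, a proper coloring
of `G[X]` extends to a proper `q`-coloring of `G` iff no tuple `(F 1, …, F l)` of
`(q−l+1)`-subsets of `X` (for `l ∈ [t]`) attached to a clique of `G \ X` is uniformly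
rainbow. -/
theorem stmt7 {V : Type*} [Fintype V] [DecidableEq V] (q t : ℕ) (hq : 0 < q)
    (ht : 0 < t) (htq : t ≤ q) (G : SimpleGraph V) (X : Finset V)
    (hcl : ∀ u v w : V, u ∉ X → v ∉ X → w ∉ X →
      G.Adj u v → G.Adj v w → u ≠ w → G.Adj u w)
    (hsize : ∀ s : Finset V, (∀ v ∈ s, v ∉ X) →
      (∀ u ∈ s, ∀ v ∈ s, u ≠ v → G.Adj u v) → s.card ≤ t)
    (c : V → Fin q) (hc : ∀ u ∈ X, ∀ v ∈ X, G.Adj u v → c u ≠ c v) :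
    (∃ c' : V → Fin q, (∀ v ∈ X, c' v = c v) ∧ ∀ u v, G.Adj u v → c' u ≠ c' v) ↔
    ¬ ∃ (l : ℕ) (_ : 1 ≤ l) (_ : l ≤ t) (F : Fin l → Finset V) (v : Fin l → V),
        (∀ i, F i ⊆ X) ∧ (∀ i, (F i).card = q - l + 1) ∧
        Function.Injective v ∧ (∀ i, v i ∉ X) ∧
        (∀ i j, i ≠ j → G.Adj (v i) (v j)) ∧
        (∀ i, ∀ u ∈ F i, G.Adj (v i) u) ∧
        URTuple c F := by
  classical
  constructor
  · -- forward: an extension forbids uniformly rainbow obstructions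
    rintro ⟨c', hc'X, hc'⟩
    rintro ⟨l, hl1, hlt, F, v, hFX, hFcard, hvinj, hvX, hvadj, hvF, hURinj, hURuni⟩
    have hlq : l ≤ q := hlt.trans htq
    set i0 : Fin l := ⟨0, hl1⟩ with hi0
    set S : Finset (Fin q) := (F i0).image c with hS
    have hScard : S.card = q - l + 1 := by
      rw [hS, Finset.card_image_of_injOn (hURinj i0), hFcard i0]
    have key : ∀ i, c' (v i) ∉ S := by
      intro i hmem
      rw [hS, hURuni i0 i] at hmem
      obtain ⟨u, hu, hcu⟩ := Finset.mem_image.mp hmem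
      have huX : u ∈ X := hFX i hu
      have : c' (v i) ≠ c' u := hc' _ _ (hvF i u hu)
      rw [hc'X u huX] at this
      exact this hcu.symm
    have hinj : Function.Injective (fun i => c' (v i)) := by
      intro i j hij
      by_contra hne
      exact hc' _ _ (hvadj i j hne) hij
    set T : Finset (Fin q) := Finset.univ.image (fun i => c' (v i)) with hT
    have hTcard : T.card = l := by
      rw [hT, Finset.card_image_of_injective _ hinj, Finset.card_univ, Fintype.card_fin]
    have hsub : T ⊆ Finset.univ \ S := by
      intro x hx
      obtain ⟨i, _, rfl⟩ := Finset.mem_image.mp hx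
      exact Finset.mem_sdiff.mpr ⟨Finset.mem_univ _, key i⟩
    have := Finset.card_le_card hsub
    rw [hTcard, Finset.card_sdiff_of_subset (Finset.subset_univ S), Finset.card_univ,
      Fintype.card_fin, hScard] at this
    omega
  · -- reverse: no obstruction ⇒ extension exists
    intro H
    set bad : V → Finset (Fin q) := fun w => (X.filter fun u => G.Adj w u).image c with hbad
    set avail : V → Finset (Fin q) := fun w => Finset.univ \ bad w with havail
    -- Hall per clique
    have hall : ∀ K : Finset V, (∀ x ∈ K, x ∉ X) → (∀ a ∈ K, ∀ b ∈ K, a ≠ b → G.Adj a b) →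
        ∃ f : V → Fin q, Set.InjOn f ↑K ∧ ∀ w ∈ K, f w ∈ avail w := by
      intro K hKX hKcl
      have hHall : ∀ s : Finset {x // x ∈ K}, s.card ≤ (s.biUnion fun x => avail x.1).card := by
        intro s
        by_contra hcon
        push_neg at hcon
        set l := s.card with hl
        set U := s.biUnion fun x => avail x.1 with hU
        have hl1 : 1 ≤ l := by omega
        -- enumeration of s
        set vs : Fin l → {x // x ∈ K} := fun i => (s.equivFin.symm i).1 with hvs
        have hvsmem : ∀ i, vs i ∈ s := fun i => (s.equivFin.symm i).2
        set v : Fin l → V := fun i => (vs i).1 with hv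
        have hvK : ∀ i, v i ∈ K := fun i => (vs i).2
        have hvinj : Function.Injective v := by
          intro i j hij
          have h1 : vs i = vs j := Subtype.ext hij
          have h2 : s.equivFin.symm i = s.equivFin.symm j := Subtype.ext h1
          exact s.equivFin.symm.injective h2
        have hvX : ∀ i, v i ∉ X := fun i => hKX _ (hvK i)
        have hvadj : ∀ i j, i ≠ j → G.Adj (v i) (v j) := by
          intro i j hij
          exact hKcl _ (hvK i) _ (hvK j) (fun h => hij (hvinj h))
        -- l ≤ t
        have hsV : (Finset.univ.image v).card = l := by
          rw [Finset.card_image_of_injective _ hvinj, Finset.card_univ, Fintype.card_fin]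
        have hlt : l ≤ t := by
          rw [← hsV]
          refine hsize _ ?_ ?_
          · intro x hx
            obtain ⟨i, _, rfl⟩ := Finset.mem_image.mp hx
            exact hvX i
          · intro a ha b hb hab
            obtain ⟨i, _, rfl⟩ := Finset.mem_image.mp ha
            obtain ⟨j, _, rfl⟩ := Finset.mem_image.mp hb
            exact hvadj i j (fun h => hab (by rw [h]))
        have hlq : l ≤ q := hlt.trans htq
        -- common forbidden colors
        set B : Finset (Fin q) := Finset.univ \ U with hB
        have hBbad : ∀ b ∈ B, ∀ i : Fin l, b ∈ bad (v i) := by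
          intro b hb i
          have hbU : b ∉ U := (Finset.mem_sdiff.mp hb).2
          have : b ∉ avail (v i) := by
            intro hba
            exact hbU (Finset.mem_biUnion.mpr ⟨vs i, hvsmem i, hba⟩)
          rw [havail] at this
          simp only [Finset.mem_sdiff, Finset.mem_univ, true_and, not_not] at this
          exact this
        have hBcard : q - l + 1 ≤ B.card := by
          have hUcard : U.card ≤ l - 1 := by omega
          rw [hB, Finset.card_sdiff_of_subset (Finset.subset_univ U), Finset.card_univ, Fintype.card_fin]
          omega
        obtain ⟨S, hSB, hScard⟩ := Finset.exists_subset_card_eq (s := B) (n := q - l + 1) hBcard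
        -- pick neighbors realizing each color
        have hpick : ∀ i : Fin l, ∀ b : Fin q, ∃ u, b ∈ S →
            u ∈ X ∧ G.Adj (v i) u ∧ c u = b := by
          intro i b
          by_cases hbS : b ∈ S
          · have hbbad : b ∈ bad (v i) := hBbad b (hSB hbS) i
            rw [hbad] at hbbad
            obtain ⟨u, hu, hcu⟩ := Finset.mem_image.mp hbbad
            rw [Finset.mem_filter] at hu
            exact ⟨u, fun _ => ⟨hu.1, hu.2, hcu⟩⟩
          · exact ⟨v i, fun h => absurd h hbS⟩
        choose pick hpickspec using hpick
        set F : Fin l → Finset V := fun i => S.image (pick i) with hF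
        have hFX : ∀ i, F i ⊆ X := by
          intro i x hx
          obtain ⟨b, hb, rfl⟩ := Finset.mem_image.mp hx
          exact (hpickspec i b hb).1
        have hcinj : ∀ i, Set.InjOn c ↑(F i) := by
          intro i x hx y hy hxy
          simp only [hF, Finset.coe_image, Set.mem_image, Finset.mem_coe] at hx hy
          obtain ⟨b1, hb1, rfl⟩ := hx
          obtain ⟨b2, hb2, rfl⟩ := hy
          have e1 := (hpickspec i b1 hb1).2.2
          have e2 := (hpickspec i b2 hb2).2.2
          rw [e1, e2] at hxy
          rw [hxy]
        have himg : ∀ i, (F i).image c = S := by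
          intro i
          rw [hF]
          simp only [Finset.image_image]
          calc S.image (c ∘ pick i) = S.image id :=
                Finset.image_congr (fun b hb => (hpickspec i b hb).2.2)
            _ = S := Finset.image_id
        have hFcard : ∀ i, (F i).card = q - l + 1 := by
          intro i
          have := Finset.card_image_of_injOn (hcinj i)
          rw [himg i, hScard] at this
          omega
        have hFadj : ∀ i, ∀ u ∈ F i, G.Adj (v i) u := by
          intro i u hu
          obtain ⟨b, hb, rfl⟩ := Finset.mem_image.mp hu
          exact (hpickspec i b hb).2.1
        exact H ⟨l, hl1, hlt, F, v, hFX, hFcard, hvinj, hvX, hvadj, hFadj,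
          hcinj, fun i j => by rw [himg i, himg j]⟩
      obtain ⟨f, hfinj, hf⟩ :=
        (Finset.all_card_le_biUnion_card_iff_existsInjective' fun x : {x // x ∈ K} => avail x.1).mp hHall
      refine ⟨fun w => if h : w ∈ K then f ⟨w, h⟩ else ⟨0, hq⟩, ?_, ?_⟩
      · intro a ha b hb hab
        rw [Finset.mem_coe] at ha hb
        simp only [dif_pos ha, dif_pos hb] at hab
        have := hfinj hab
        exact congrArg Subtype.val this
      · intro w hw
        simp only [dif_pos hw]
        exact hf ⟨w, hw⟩
    -- cliques of G \ X
    set Kset : V → Finset V := fun v =>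
      Finset.univ.filter (fun w => w ∉ X ∧ (w = v ∨ G.Adj v w)) with hKset
    have hKmem : ∀ v, v ∉ X → v ∈ Kset v := by
      intro v hv
      simp [hKset, hv]
    have hKX : ∀ v, ∀ x ∈ Kset v, x ∉ X := by
      intro v x hx
      simp only [hKset, Finset.mem_filter] at hx
      exact hx.2.1
    have hKdef : ∀ v x, x ∈ Kset v ↔ x ∉ X ∧ (x = v ∨ G.Adj v x) := by
      intro v x
      simp [hKset]
    have hKcl : ∀ v, v ∉ X → ∀ a ∈ Kset v, ∀ b ∈ Kset v, a ≠ b → G.Adj a b := by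
      intro v hv a ha b hb hab
      rw [hKdef] at ha hb
      rcases ha.2 with rfl | hav
      · rcases hb.2 with rfl | hbv
        · exact absurd rfl hab
        · exact hbv
      · rcases hb.2 with rfl | hbv
        · exact hav.symm
        · exact hcl a v b ha.1 hv hb.1 hav.symm hbv hab
    have hKeq : ∀ v, v ∉ X → ∀ w ∈ Kset v, Kset w = Kset v := by
      have step : ∀ v, v ∉ X → ∀ w ∈ Kset v, Kset w ⊆ Kset v := by
        intro v hv w hw u hu
        rw [hKdef] at hw hu ⊢
        refine ⟨hu.1, ?_⟩
        rcases hu.2 with rfl | hwu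
        · exact hw.2
        · rcases hw.2 with rfl | hvw
          · exact Or.inr hwu
          · by_cases huv : u = v
            · exact Or.inl huv
            · exact Or.inr (hcl v w u hv hw.1 hu.1 hvw hwu (fun h => huv h.symm))
      intro v hv w hw
      have hwX : w ∉ X := hKX v w hw
      have hvw : v ∈ Kset w := by
        rw [hKdef] at hw ⊢
        refine ⟨hv, ?_⟩
        rcases hw.2 with rfl | h
        · exact Or.inl rfl
        · exact Or.inr h.symm
      exact Finset.Subset.antisymm (step v hv w hw) (step w hwX v hvw)
    -- glue
    set fK : Finset V → (V → Fin q) := fun K =>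
      if h : (∀ x ∈ K, x ∉ X) ∧ (∀ a ∈ K, ∀ b ∈ K, a ≠ b → G.Adj a b) then
        (hall K h.1 h.2).choose
      else fun _ => ⟨0, hq⟩ with hfK
    have hfKspec : ∀ v, v ∉ X →
        Set.InjOn (fK (Kset v)) ↑(Kset v) ∧ ∀ w ∈ Kset v, fK (Kset v) w ∈ avail w := by
      intro v hv
      have hcond : (∀ x ∈ Kset v, x ∉ X) ∧ (∀ a ∈ Kset v, ∀ b ∈ Kset v, a ≠ b → G.Adj a b) :=
        ⟨hKX v, hKcl v hv⟩
      rw [hfK]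
      simp only [dif_pos hcond]
      exact (hall (Kset v) hcond.1 hcond.2).choose_spec
    set c' : V → Fin q := fun w => if w ∈ X then c w else fK (Kset w) w with hc'def
    refine ⟨c', fun v hv => by simp [hc'def, hv], ?_⟩
    intro u v huv
    by_cases hu : u ∈ X <;> by_cases hv : v ∈ X
    · simp only [hc'def, if_pos hu, if_pos hv]
      exact hc u hu v hv huv
    · simp only [hc'def, if_pos hu, if_neg hv]
      have h1 : fK (Kset v) v ∈ avail v := (hfKspec v hv).2 v (hKmem v hv)
      rw [havail, Finset.mem_sdiff] at h1
      intro heq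
      apply h1.2
      rw [hbad]
      exact Finset.mem_image.mpr ⟨u, Finset.mem_filter.mpr ⟨hu, huv.symm⟩, heq⟩
    · simp only [hc'def, if_neg hu, if_pos hv]
      have h1 : fK (Kset u) u ∈ avail u := (hfKspec u hu).2 u (hKmem u hu)
      rw [havail, Finset.mem_sdiff] at h1
      intro heq
      apply h1.2
      rw [hbad]
      exact Finset.mem_image.mpr ⟨v, Finset.mem_filter.mpr ⟨hv, huv⟩, heq.symm⟩
    · have hvK : v ∈ Kset u := by
        rw [hKdef]
        exact ⟨hv, Or.inr huv⟩
      have hKvu : Kset v = Kset u := hKeq u hu v hvK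
      simp only [hc'def, if_neg hu, if_neg hv]
      rw [hKvu]
      have hinj := (hfKspec u hu).1
      intro heq
      exact G.ne_of_adj huv (hinj (Finset.mem_coe.mpr (hKmem u hu)) (Finset.mem_coe.mpr hvK) heq)
end

section
/- Let F be a field with |F| ≥ d for a positive integer d, and let C ⊆ F^d be the set of d Vandermonde vectors (1, α_i, ..., α_i^{d−1})ᵀ for distinct α₁,...,α_d ∈ F. For a positive integer ℓ, define p : F^{d×(dℓ)} → F mapping M = (M₁,...,M_ℓ), with each M_i ∈ F^{d×d}, to the product ∏_{i∈[ℓ]} det(M_i'), where M_i' is M_i with its first row replaced by ones. Then p is a polynomial of degree (d−1)ℓ, and for every C-colored matrix M, p(M) ≠ 0 if and only if for each i ∈ [ℓ], the columns of M_i are exactly all d vectors of C. Consequently, the pair (C, p) captures the (d, ℓ, d)-uniformly rainbow property. -/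
/-!
On a colored block every column is a Vandermonde vector `(α s ^ k)ₖ`, so the block is the
transpose of a Vandermonde matrix; its first row is already all ones, and its determinant is
nonzero iff the chosen nodes `s` are distinct, i.e. iff the columns run through all of `C`.
For the degree: in each factor row `0` has degree `0` and all other rows degree `1`, so `P` is
homogeneous of degree `(d - 1) * l`, and `P ≠ 0` because it does not vanish when every block is
the full Vandermonde matrix.
-/

open Matrix MvPolynomial Function

namespace MvPolynomial

variable {σ n R : Type*} [CommRing R] [Fintype n] [DecidableEq n]

theorem isHomogeneous_det_of_row {A : Matrix n n (MvPolynomial σ R)} {w : n → ℕ}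
    (hA : ∀ i j, (A i j).IsHomogeneous (w i)) : A.det.IsHomogeneous (∑ i, w i) := by
  rw [det_apply']
  refine IsHomogeneous.sum _ _ _ fun τ _ => ?_
  have h := (isHomogeneous_C σ ((Equiv.Perm.sign τ : ℤ) : R)).mul
    (IsHomogeneous.prod Finset.univ _ _ fun i _ => hA (τ i) i)
  rwa [map_intCast, zero_add, Equiv.sum_comp τ w] at h

theorem isHomogeneous_det_updateRow_X_one (x : n → n → σ) (r : n) :
    (updateRow (of fun a b => X (x a b)) r 1 : Matrix n n (MvPolynomial σ R)).det.IsHomogeneous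
      (Fintype.card n - 1) := by
  have hw : ∑ a : n, (if a = r then 0 else 1) = Fintype.card n - 1 := by
    simp [Finset.sum_ite, Finset.filter_ne']
  rw [← hw]
  refine isHomogeneous_det_of_row fun a b => ?_
  by_cases h : a = r
  · subst h; simpa using isHomogeneous_one σ R
  · simpa [h] using isHomogeneous_X R (x a b)

theorem eval_det_updateRow_X {ι : Type*} (M : ι → Matrix n n R) (i : ι) (r : n) :
    eval (fun t : ι × n × n => M t.1 t.2.1 t.2.2)
      (updateRow (of fun a b => X (i, a, b)) r 1 : Matrix n n (MvPolynomial (ι × n × n) R)).det =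
      (updateRow (M i) r 1).det := by
  rw [RingHom.map_det, RingHom.mapMatrix_apply, map_updateRow]
  congr 2
  · ext a b
    simp
  · ext b
    simp

end MvPolynomial

namespace Matrix

variable {F : Type*} [Field F] {d : ℕ} {α : Fin d → F}

theorem vandermonde_injective (hα : Injective α) : Injective (vandermonde α) :=
  fun _ _ hst => by_contra fun hne =>
    det_vandermonde_ne_zero_iff.mpr hα (det_zero_of_row_eq hne hst)

theorem updateRow_transpose_vandermonde_zero (hd : 0 < d) (v : Fin d → F) :
    (vandermonde v)ᵀ.updateRow ⟨0, hd⟩ 1 = (vandermonde v)ᵀ := by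
  ext a b
  by_cases h : a = ⟨0, hd⟩
  · subst h; simp
  · simp [h]

theorem det_vandermonde_comp_ne_zero_iff (hα : Injective α) (s : Fin d → Fin d) :
    (vandermonde (α ∘ s)).det ≠ 0 ↔ Surjective s := by
  rw [det_vandermonde_ne_zero_iff, hα.of_comp_iff, Finite.injective_iff_surjective]

theorem forall_exists_col_transpose_vandermonde_comp_iff (hα : Injective α) (s : Fin d → Fin d) :
    (∀ x, ∃ j, ∀ k : Fin d, (vandermonde (α ∘ s))ᵀ k j = α x ^ (k : ℕ)) ↔ Surjective s := by
  have hcol : ∀ j x, (∀ k : Fin d, (vandermonde (α ∘ s))ᵀ k j = α x ^ (k : ℕ)) ↔ s j = x :=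
    fun j x => by rw [← (vandermonde_injective hα).eq_iff, funext_iff]; rfl
  simp only [hcol, Surjective]

end Matrix

theorem Function.Injective.injective_comp_and_image_eq_iff {ι κ β : Type*} [Fintype κ]
    [DecidableEq β] {v : κ → β} (hv : Injective v) (s : ι → κ → κ) :
    ((∀ i, Injective (v ∘ s i)) ∧
      ∀ i i', Finset.univ.image (v ∘ s i) = Finset.univ.image (v ∘ s i')) ↔
      ∀ i, Surjective (s i) := by
  simp only [hv.of_comp_iff, Finite.injective_iff_surjective]
  refine ⟨And.left, fun h => ⟨h, fun i i' => ?_⟩⟩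
  classical
  have himage : ∀ i, Finset.univ.image (v ∘ s i) = Finset.univ.image v := fun i => by
    rw [← Finset.image_image, Finset.image_univ_of_surjective (h i)]
  rw [himage, himage]

theorem stmt9_general {F : Type*} [Field F] [DecidableEq F] (d l : ℕ) (hd : 0 < d)
    (α : Fin d → F) (hα : Function.Injective α) :
    let P : MvPolynomial (Fin l × Fin d × Fin d) F :=
      ∏ i : Fin l, Matrix.det (Matrix.updateRow
        (Matrix.of fun a b => MvPolynomial.X (i, a, b)) ⟨0, hd⟩ 1)
    P.totalDegree = (d - 1) * l ∧
    ∀ M : Fin l → Matrix (Fin d) (Fin d) F,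
      (∀ i j, ∃ s : Fin d, ∀ k, M i k j = α s ^ (k : ℕ)) →
      ((MvPolynomial.eval (fun t => M t.1 t.2.1 t.2.2) P ≠ 0 ↔
          ∀ (i : Fin l) (s : Fin d), ∃ j : Fin d, ∀ k, M i k j = α s ^ (k : ℕ)) ∧
        (MvPolynomial.eval (fun t => M t.1 t.2.1 t.2.2) P ≠ 0 ↔
          (∀ i, Function.Injective fun j => fun k => M i k j) ∧
          ∀ i i', (Finset.univ.image fun j => fun k : Fin d => M i k j) =
            Finset.univ.image fun j => fun k => M i' k j)) := by
  intro P
  have heval : ∀ s : Fin l → Fin d → Fin d,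
      eval (fun t => (vandermonde (α ∘ s t.1))ᵀ t.2.1 t.2.2) P ≠ 0 ↔ ∀ i, Surjective (s i) := by
    intro s
    simp only [P, map_prod, eval_det_updateRow_X fun i => (vandermonde (α ∘ s i))ᵀ,
      updateRow_transpose_vandermonde_zero, det_transpose, Finset.prod_ne_zero_iff,
      Finset.mem_univ, true_implies, det_vandermonde_comp_ne_zero_iff hα]
  refine ⟨?_, fun M hM => ?_⟩
  · have hP : P ≠ 0 := fun h => by
      simpa [h] using (heval fun _ => id).mpr fun _ => surjective_id
    have hhom := IsHomogeneous.prod (Finset.univ : Finset (Fin l)) _ _ fun i _ =>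
      isHomogeneous_det_updateRow_X_one (R := F) (fun a b => (i, a, b)) (⟨0, hd⟩ : Fin d)
    simpa [mul_comm] using hhom.totalDegree hP
  · choose s hs using hM
    obtain rfl : M = fun i => (vandermonde (α ∘ s i))ᵀ := by
      ext i k j
      exact hs i j k
    rw [heval]
    exact ⟨forall_congr' fun i => (forall_exists_col_transpose_vandermonde_comp_iff hα (s i)).symm,
      ((vandermonde_injective hα).injective_comp_and_image_eq_iff s).symm⟩

/-- With `C` the set of `d` Vandermonde vectors in `F^d`, the product over `l` blocks of
the first-row-replaced determinant is a polynomial of total degree `(d−1)·l` which is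
nonzero on a `C`-colored matrix iff every block's columns are exactly all of `C`;
equivalently it captures the `(d, l, d)`-uniformly rainbow property. -/
theorem stmt9 {F : Type*} [Field F] [DecidableEq F] (d l : ℕ) (hd : 0 < d) (hl : 0 < l)
    (α : Fin d → F) (hα : Function.Injective α) :
    let P : MvPolynomial (Fin l × Fin d × Fin d) F :=
      ∏ i : Fin l, Matrix.det (Matrix.updateRow
        (Matrix.of fun a b => MvPolynomial.X (i, a, b)) ⟨0, hd⟩ 1)
    P.totalDegree = (d - 1) * l ∧
    ∀ M : Fin l → Matrix (Fin d) (Fin d) F,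
      (∀ i j, ∃ s : Fin d, ∀ k, M i k j = α s ^ (k : ℕ)) →
      ((MvPolynomial.eval (fun t => M t.1 t.2.1 t.2.2) P ≠ 0 ↔
          ∀ (i : Fin l) (s : Fin d), ∃ j : Fin d, ∀ k, M i k j = α s ^ (k : ℕ)) ∧
        (MvPolynomial.eval (fun t => M t.1 t.2.1 t.2.2) P ≠ 0 ↔
          (∀ i, Function.Injective fun j => fun k => M i k j) ∧
          ∀ i i', (Finset.univ.image fun j => fun k : Fin d => M i k j) =
            Finset.univ.image fun j => fun k => M i' k j)) :=
  stmt9_general d l hd α hα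
end

section
/- Let d, ℓ be positive integers and q = d + 1, let F be a field with |F| ≥ q, and let C ⊆ F^q be the set of q Vandermonde vectors (1, α_i, ..., α_i^{q−1})ᵀ for distinct α₁,...,α_q ∈ F; let a ∈ F^q be the sum of all vectors in C. Define p : F^{q×(dℓ)} → F mapping M = (M₁,...,M_ℓ), each M_i ∈ F^{q×d}, to p_{q,d}(M₁) · ∏_{i=2}^{ℓ} p_{q,q}(M_i, a − y), where y is the sum of the columns of M₁, and p_{q,t}(N) for N ∈ F^{q×t} denotes the determinant of the top t×t submatrix of N with its first row replaced by ones. Then p is a polynomial of degree at most dℓ − 1, and (C, p) captures the (d, ℓ, d+1)-uniformly rainbow property: for every C-colored M, p(M) ≠ 0 iff the ℓ column sets of M₁,...,M_ℓ are equal and of size d. -/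
/-!
At a `C`-colored matrix every factor of `p` is a Vandermonde determinant. The first one has as
nodes the `α`'s of the first block. If these are distinct, `a − y` is the Vandermonde vector of
the one node `m` missing from the first block, so the `i`-th factor has as nodes those of block
`i` followed by `m`. A Vandermonde determinant vanishes iff two nodes coincide, hence `p(M) ≠ 0`
iff the first block has distinct columns and every other block has distinct columns avoiding `m`,
i.e. the same column set as the first block. For the degree bound, each determinant has a row of
ones and all its other entries have degree at most one.
-/

open MvPolynomial Matrix Finset Function

lemma totalDegree_det_le_sum {σ R n : Type*} [CommRing R] [Fintype n] [DecidableEq n]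
    (A : Matrix n n (MvPolynomial σ R)) (c : n → ℕ)
    (h : ∀ i j, (A i j).totalDegree ≤ c i) :
    A.det.totalDegree ≤ ∑ i, c i := by
  rw [det_apply]
  refine totalDegree_finsetSum_le fun τ _ => (totalDegree_smul_le _ _).trans ?_
  calc (∏ i, A (τ i) i).totalDegree ≤ ∑ i, (A (τ i) i).totalDegree :=
        totalDegree_finsetProd _ _
    _ ≤ ∑ i, c (τ i) := sum_le_sum fun i _ => h _ _
    _ = ∑ i, c i := Equiv.sum_comp τ c

lemma totalDegree_det_updateRow_one_le {σ R n : Type*} [CommRing R] [Fintype n] [DecidableEq n]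
    (A : Matrix n n (MvPolynomial σ R)) (r : n) (h : ∀ i j, (A i j).totalDegree ≤ 1) :
    (A.updateRow r 1).det.totalDegree ≤ Fintype.card n - 1 := by
  refine (totalDegree_det_le_sum _ (fun i => if i = r then 0 else 1) fun i j => ?_).trans ?_
  · rcases eq_or_ne i r with rfl | hi
    · simp
    · simpa [hi] using h i j
  · simp [sum_ite, filter_ne']

lemma RingHom.map_det_updateRow_one {R S n : Type*} [CommRing R] [CommRing S] [Fintype n]
    [DecidableEq n] (f : R →+* S) (A : Matrix n n R) (r : n) :
    f (A.updateRow r 1).det = ((A.map f).updateRow r 1).det := by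
  rw [f.map_det, f.mapMatrix_apply, map_updateRow]
  congr
  exact funext fun _ => map_one f

lemma det_updateRow_one_eq_det_vandermonde {R : Type*} [CommRing R] {n : ℕ}
    (N : Matrix (Fin n) (Fin n) R) (v : Fin n → R) (r : Fin n) (hr : (r : ℕ) = 0)
    (hN : ∀ k c, k ≠ r → N k c = v c ^ (k : ℕ)) :
    (N.updateRow r 1).det = (vandermonde v).det := by
  rw [← det_transpose (vandermonde v)]
  congr 1
  ext k c
  rcases eq_or_ne k r with rfl | hk
  · simp [hr]
  · simp [hk, hN k c hk]

section MissingElement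

variable {β : Type*} [Fintype β] [DecidableEq β] {d : ℕ}

lemma exists_notMem_range_of_card_eq_succ (hβ : Fintype.card β = d + 1) (s : Fin d → β) :
    ∃ m, m ∉ Set.range s := by
  by_contra! h
  have := Fintype.card_le_of_surjective s h
  rw [Fintype.card_fin] at this
  omega

variable {s₀ : Fin d → β} {m : β}

lemma univ_eq_insert_image (hβ : Fintype.card β = d + 1) (hs₀ : Injective s₀)
    (hm : m ∉ Set.range s₀) : (univ : Finset β) = insert m (univ.image s₀) := by
  refine (eq_univ_of_card _ ?_).symm
  rw [card_insert_of_notMem (by simpa using hm), card_image_of_injective _ hs₀, hβ, card_univ,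
    Fintype.card_fin]

lemma sum_sub_sum_comp_eq {G : Type*} [AddCommGroup G] (hβ : Fintype.card β = d + 1)
    (hs₀ : Injective s₀) (hm : m ∉ Set.range s₀) (f : β → G) :
    ∑ u, f u - ∑ j, f (s₀ j) = f m := by
  rw [univ_eq_insert_image hβ hs₀ hm, sum_insert (by simpa using hm),
    sum_image fun _ _ _ _ h => hs₀ h, add_sub_cancel_right]

lemma snoc_injective_iff_image_eq (hβ : Fintype.card β = d + 1) (hs₀ : Injective s₀)
    (hm : m ∉ Set.range s₀) (s : Fin d → β) :
    Injective (Fin.snoc s m : Fin (d + 1) → β) ↔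
      Injective s ∧ univ.image s = univ.image s₀ := by
  rw [Fin.snoc_injective_iff]
  refine and_congr_right fun hs => ⟨fun hms => ?_, fun himage hms => ?_⟩
  · refine eq_of_subset_of_card_le (fun u hu => ?_) (by
      rw [card_image_of_injective _ hs, card_image_of_injective _ hs₀])
    have hum : u ≠ m := by rintro rfl; simp_all
    have hu' := mem_univ u
    rw [univ_eq_insert_image hβ hs₀ hm, mem_insert] at hu'
    exact hu'.resolve_left hum
  · have hms' : m ∈ univ.image s := by simpa using hms
    exact hm (by simpa [himage] using hms')

lemma forall_snoc_injective_iff {ι : Type*} (hβ : Fintype.card β = d + 1)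
    {s : ι → Fin d → β} {i₀ : ι} (h₀ : Injective (s i₀))
    (hm : m ∉ Set.range (s i₀)) :
    (∀ i, i ≠ i₀ → Injective (Fin.snoc (s i) m : Fin (d + 1) → β)) ↔
      (∀ i, Injective (s i)) ∧ ∀ i i', univ.image (s i) = univ.image (s i') := by
  simp only [snoc_injective_iff_image_eq hβ h₀ hm]
  refine ⟨fun h => ?_, fun ⟨hinj, himage⟩ i _ => ⟨hinj i, himage i i₀⟩⟩
  have hagree (i : ι) : Injective (s i) ∧ univ.image (s i) = univ.image (s i₀) := by
    rcases eq_or_ne i i₀ with rfl | hi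
    exacts [⟨h₀, rfl⟩, h i hi]
  exact ⟨fun i => (hagree i).1, fun i i' => (hagree i).2.trans (hagree i').2.symm⟩

end MissingElement

noncomputable section RainbowPolynomial

variable {F : Type*} [Field F] {d l : ℕ}

/-- The matrix of `p_{q,d}(M₁)`, where `M₁` is block `i₀`; the variable `X (i, k, j)` stands
for the entry `(k, j)` of block `i`. -/
def firstBlockMatrix (hd : 0 < d) (i₀ : Fin l) :
    Matrix (Fin d) (Fin d) (MvPolynomial (Fin l × Fin (d + 1) × Fin d) F) :=
  updateRow (of fun k j => X (i₀, Fin.castSucc k, j)) ⟨0, hd⟩ 1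

/-- The matrix of `p_{q,q}(M_i, a − y)`, where `y` is the column sum of block `i₀`. -/
def blockMatrix (a : Fin (d + 1) → F) (i₀ i : Fin l) :
    Matrix (Fin (d + 1)) (Fin (d + 1)) (MvPolynomial (Fin l × Fin (d + 1) × Fin d) F) :=
  updateRow (of fun k c =>
    if h : (c : ℕ) < d then X (i, k, ⟨c, h⟩) else C (a k) - ∑ j, X (i₀, k, j)) 0 1

def rainbowPoly (hd : 0 < d) (a : Fin (d + 1) → F) (i₀ : Fin l) :
    MvPolynomial (Fin l × Fin (d + 1) × Fin d) F :=
  (firstBlockMatrix hd i₀).det * ∏ i ∈ univ.filter (· ≠ i₀), (blockMatrix a i₀ i).det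

lemma totalDegree_rainbowPoly_le (hd : 0 < d) (a : Fin (d + 1) → F) (i₀ : Fin l) :
    (rainbowPoly hd a i₀).totalDegree ≤ d * l - 1 := by
  have hfirst : (firstBlockMatrix hd i₀ (F := F)).det.totalDegree ≤ d - 1 := by
    refine (totalDegree_det_updateRow_one_le _ _ fun _ _ => ?_).trans (by simp)
    exact (totalDegree_X _).le
  have hblock (i : Fin l) : (blockMatrix a i₀ i).det.totalDegree ≤ d := by
    refine (totalDegree_det_updateRow_one_le _ _ fun k c => ?_).trans (by simp)
    dsimp only [of_apply]
    split
    · exact (totalDegree_X _).le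
    · exact (totalDegree_sub _ _).trans
        (max_le (by simp) (totalDegree_finsetSum_le fun j _ => (totalDegree_X _).le))
  have hcard : #(univ.filter (· ≠ i₀)) = l - 1 := by simp [filter_ne']
  calc _ ≤ (d - 1) + (l - 1) * d := by
        refine (totalDegree_mul _ _).trans
          (add_le_add hfirst ((totalDegree_finsetProd _ _).trans ?_))
        exact (sum_le_card_nsmul _ _ _ fun i _ => hblock i).trans_eq (by rw [hcard, smul_eq_mul])
    _ ≤ d * l - 1 := by
        obtain ⟨n, rfl⟩ := Nat.exists_eq_add_of_lt i₀.pos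
        simp only [Nat.add_sub_cancel, zero_add, mul_add, mul_comm n d]
        omega

variable {x : Fin l × Fin (d + 1) × Fin d → F} {v : Fin l → Fin d → F}

lemma eval_det_firstBlockMatrix (hd : 0 < d) (i₀ : Fin l)
    (hx : ∀ i k j, x (i, k, j) = v i j ^ (k : ℕ)) :
    eval x (firstBlockMatrix hd i₀).det = (vandermonde (v i₀)).det := by
  rw [firstBlockMatrix, RingHom.map_det_updateRow_one]
  exact det_updateRow_one_eq_det_vandermonde _ _ ⟨0, hd⟩ rfl fun k j _ => by simp [hx]

lemma eval_det_blockMatrix (a : Fin (d + 1) → F) (i₀ i : Fin l) (w : F)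
    (hx : ∀ i k j, x (i, k, j) = v i j ^ (k : ℕ))
    (ha : ∀ k : Fin (d + 1), a k - ∑ j, v i₀ j ^ (k : ℕ) = w ^ (k : ℕ)) :
    eval x (blockMatrix a i₀ i).det = (vandermonde (Fin.snoc (v i) w)).det := by
  rw [blockMatrix, RingHom.map_det_updateRow_one]
  refine det_updateRow_one_eq_det_vandermonde _ _ 0 (Fin.val_zero _) fun k c _ => ?_
  cases c using Fin.lastCases with
  | last => simp [hx, ha]
  | cast j => simp [hx]

lemma eval_rainbowPoly_ne_zero_iff (hd : 0 < d) {α : Fin (d + 1) → F} (hα : Injective α)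
    (i₀ : Fin l) {s : Fin l → Fin d → Fin (d + 1)}
    (hx : ∀ i k j, x (i, k, j) = α (s i j) ^ (k : ℕ)) :
    eval x (rainbowPoly hd (fun k => ∑ u, α u ^ (k : ℕ)) i₀) ≠ 0 ↔
      (∀ i, Injective (s i)) ∧ ∀ i i', univ.image (s i) = univ.image (s i') := by
  have hfirst := eval_det_firstBlockMatrix (v := fun i => α ∘ s i) hd i₀ hx
  rw [rainbowPoly, map_mul, mul_ne_zero_iff, hfirst, det_vandermonde_ne_zero_iff,
    hα.of_comp_iff]
  by_cases h₀ : Injective (s i₀)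
  · obtain ⟨m, hm⟩ := exists_notMem_range_of_card_eq_succ (Fintype.card_fin _) (s i₀)
    have hblock (i : Fin l) := eval_det_blockMatrix (v := fun i => α ∘ s i) _ i₀ i (α m) hx
      fun k => sum_sub_sum_comp_eq (Fintype.card_fin _) h₀ hm fun u => α u ^ (k : ℕ)
    simp only [map_prod, hblock, prod_ne_zero_iff, det_vandermonde_ne_zero_iff, ← Fin.comp_snoc,
      hα.of_comp_iff, mem_filter, mem_univ, true_and, h₀]
    exact forall_snoc_injective_iff (Fintype.card_fin _) h₀ hm
  · exact iff_of_false (fun h => h₀ h.1) fun h => h₀ (h.1 i₀)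

end RainbowPolynomial

/-- The polynomial `p_{q,d}(M₁) · ∏_{i≥2} p_{q,q}(M_i, a − y)` for `q = d + 1`, where
`y` is the column sum of `M₁` and `a` the sum of all Vandermonde vectors, has total
degree at most `d·l − 1` and captures the `(d, l, d+1)`-uniformly rainbow property. -/
theorem stmt10 {F : Type*} [Field F] [DecidableEq F] (d l : ℕ) (hd : 0 < d) (hl : 0 < l)
    (α : Fin (d + 1) → F) (hα : Function.Injective α) :
    let i0 : Fin l := ⟨0, hl⟩
    let aC : Fin (d + 1) → MvPolynomial (Fin l × Fin (d + 1) × Fin d) F :=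
      fun rr => MvPolynomial.C (∑ s : Fin (d + 1), α s ^ (rr : ℕ))
    let y : Fin (d + 1) → MvPolynomial (Fin l × Fin (d + 1) × Fin d) F :=
      fun rr => ∑ j : Fin d, MvPolynomial.X (i0, rr, j)
    let P : MvPolynomial (Fin l × Fin (d + 1) × Fin d) F :=
      Matrix.det (Matrix.updateRow
        (Matrix.of fun a b : Fin d => MvPolynomial.X (i0, Fin.castSucc a, b)) ⟨0, hd⟩ 1) *
      ∏ i ∈ Finset.univ.filter (fun i : Fin l => i ≠ i0),
        Matrix.det (Matrix.updateRow
          (Matrix.of fun rr c : Fin (d + 1) =>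
            if h : (c : ℕ) < d then MvPolynomial.X (i, rr, ⟨c, h⟩) else aC rr - y rr)
          0 1)
    P.totalDegree ≤ d * l - 1 ∧
    ∀ M : Fin l → Matrix (Fin (d + 1)) (Fin d) F,
      (∀ i j, ∃ s, ∀ k, M i k j = α s ^ (k : ℕ)) →
      (MvPolynomial.eval (fun t => M t.1 t.2.1 t.2.2) P ≠ 0 ↔
        (∀ i, Function.Injective fun j => fun k => M i k j) ∧
        ∀ i i', (Finset.univ.image fun j => fun k : Fin (d + 1) => M i k j) =
          Finset.univ.image fun j => fun k => M i' k j) := by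
  intro i0 aC y P
  refine ⟨totalDegree_rainbowPoly_le hd _ i0, fun M hM => ?_⟩
  choose s hs using hM
  have hpow : Injective fun u (k : Fin (d + 1)) => α u ^ (k : ℕ) := fun u v h =>
    hα (by simpa using congrFun h ⟨1, by omega⟩)
  have hcols (i : Fin l) :
      (fun j k => M i k j) = (fun u (k : Fin (d + 1)) => α u ^ (k : ℕ)) ∘ s i :=
    funext fun j => funext (hs i j)
  simp only [hcols, hpow.of_comp_iff, ← image_image, image_inj hpow]
  exact eval_rainbowPoly_ne_zero_iff hd hα i0 fun i k j => hs i j k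
end

section
/- Let d, ℓ, m, q, r be positive integers with r ≥ 2, let F be a field, and suppose there exist a set C ⊆ F^m with |C| = q and a polynomial p : F^{m×(dℓ)} → F of degree at most r such that (C, p) captures the (d,ℓ,q)-uniformly rainbow property. Let G = (V,E) be a graph on n vertices and F a collection of ℓ-tuples of d-subsets of V. For each tuple T ∈ F, define the polynomial p_T in the m·n variables (x_v)_{v∈V} by substituting into p the variable vectors of the vertices of T. If F' ⊆ F is such that {p_T : T ∈ F'} spans the same linear subspace as {p_T : T ∈ F}, then the instances (G, F) and (G, F') of the (d,ℓ,q)-uniformly-rainbow-free coloring problem have the same solution set: a proper q-coloring of G has no uniformly rainbow tuple in F if and only if it has no uniformly rainbow tuple in F'. -/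
/-!
Substitute `c₀ (c v)` for the variable vector of each vertex `v`. At this point `p_T` evaluates to
`p` at the colour pattern of `T`, which is nonzero exactly when `T` is uniformly rainbow. So a
colouring is a solution of an instance iff this evaluation functional kills all its constraint
polynomials, i.e. kills their span, and the two instances have the same span.
-/

open MvPolynomial

theorem Submodule.forall_map_eq_zero_iff_of_span_image_eq {R M N ι : Type*} [Semiring R]
    [AddCommMonoid M] [Module R M] [AddCommMonoid N] [Module R N]
    (L : M →ₗ[R] N) (f : ι → M) {A B : Set ι}
    (hspan : Submodule.span R (f '' A) = Submodule.span R (f '' B)) :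
    (∀ a ∈ A, L (f a) = 0) ↔ ∀ b ∈ B, L (f b) = 0 := by
  have hker {S : Set ι} :
      (∀ s ∈ S, L (f s) = 0) ↔ Submodule.span R (f '' S) ≤ LinearMap.ker L := by
    simp [Submodule.span_le, Set.subset_def]
  rw [hker, hker, hspan]

theorem stmt11_general {K : Type*} [Field K] {V : Type*}
    (m d l q : ℕ)
    (c0 : Fin q → Fin m → K)
    (P : MvPolynomial (Fin m × Fin l × Fin d) K)
    (hcap : ∀ A : Fin l → Fin d → Fin q,
      MvPolynomial.eval (fun t => c0 (A t.2.1 t.2.2) t.1) P ≠ 0 ↔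
        (∀ j, Function.Injective (A j)) ∧
        ∀ j j', Finset.univ.image (A j) = Finset.univ.image (A j'))
    (Fcal Fcal' : Set (Fin l → Fin d → V))
    (hspan : Submodule.span K
        ((fun T : Fin l → Fin d → V => MvPolynomial.rename
          (fun t : Fin m × Fin l × Fin d => (T t.2.1 t.2.2, t.1)) P) '' Fcal') =
      Submodule.span K
        ((fun T : Fin l → Fin d → V => MvPolynomial.rename
          (fun t : Fin m × Fin l × Fin d => (T t.2.1 t.2.2, t.1)) P) '' Fcal))
    (c : V → Fin q) :
    (∀ T ∈ Fcal, ¬ ((∀ j, Function.Injective (c ∘ T j)) ∧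
        ∀ j j', Finset.univ.image (c ∘ T j) = Finset.univ.image (c ∘ T j'))) ↔
    (∀ T ∈ Fcal', ¬ ((∀ j, Function.Injective (c ∘ T j)) ∧
        ∀ j j', Finset.univ.image (c ∘ T j) = Finset.univ.image (c ∘ T j'))) := by
  set x : V × Fin m → K := fun v => c0 (c v.1) v.2
  have heval_ne_zero (T : Fin l → Fin d → V) :
      aeval x (rename (fun t : Fin m × Fin l × Fin d => (T t.2.1 t.2.2, t.1)) P) ≠ 0 ↔
        (∀ j, Function.Injective (c ∘ T j)) ∧
          ∀ j j', Finset.univ.image (c ∘ T j) = Finset.univ.image (c ∘ T j') := by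
    rw [aeval_rename]
    exact hcap fun j i => c (T j i)
  simpa only [AlgHom.toLinearMap_apply, ← heval_ne_zero, not_not] using
    Submodule.forall_map_eq_zero_iff_of_span_image_eq (aeval x).toLinearMap _ hspan.symm

/-- If `(C, p)` captures the `(d,l,q)`-uniformly rainbow property and the constraint
polynomials of `F'` span the same subspace as those of `F`, then the two instances of
the uniformly-rainbow-free coloring problem have the same solution set. -/
theorem stmt11 {K : Type*} [Field K] {V : Type*}
    (m d l q r : ℕ) (hd : 0 < d) (hl : 0 < l) (hq : 0 < q) (hm : 0 < m) (hr : 2 ≤ r)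
    (c0 : Fin q → Fin m → K) (hc0 : Function.Injective c0)
    (P : MvPolynomial (Fin m × Fin l × Fin d) K)
    (hdeg : P.totalDegree ≤ r)
    (hcap : ∀ A : Fin l → Fin d → Fin q,
      MvPolynomial.eval (fun t => c0 (A t.2.1 t.2.2) t.1) P ≠ 0 ↔
        (∀ j, Function.Injective (A j)) ∧
        ∀ j j', Finset.univ.image (A j) = Finset.univ.image (A j'))
    (G : SimpleGraph V) (Fcal Fcal' : Set (Fin l → Fin d → V))
    (hsub : Fcal' ⊆ Fcal)
    (hT : ∀ T ∈ Fcal, ∀ j, Function.Injective (T j))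
    (hspan : Submodule.span K
        ((fun T : Fin l → Fin d → V => MvPolynomial.rename
          (fun t : Fin m × Fin l × Fin d => (T t.2.1 t.2.2, t.1)) P) '' Fcal') =
      Submodule.span K
        ((fun T : Fin l → Fin d → V => MvPolynomial.rename
          (fun t : Fin m × Fin l × Fin d => (T t.2.1 t.2.2, t.1)) P) '' Fcal))
    (c : V → Fin q) (hc : ∀ u v, G.Adj u v → c u ≠ c v) :
    (∀ T ∈ Fcal, ¬ ((∀ j, Function.Injective (c ∘ T j)) ∧
        ∀ j j', Finset.univ.image (c ∘ T j) = Finset.univ.image (c ∘ T j'))) ↔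
    (∀ T ∈ Fcal', ¬ ((∀ j, Function.Injective (c ∘ T j)) ∧
        ∀ j j', Finset.univ.image (c ∘ T j) = Finset.univ.image (c ∘ T j'))) :=
  stmt11_general m d l q c0 P hcap Fcal Fcal' hspan c
end

section
/- Let ℓ ≥ 2 and q ≥ 2 be integers. Let H = (V, E) be a hypergraph all of whose edges have size at most ℓ. Let Z be a set of (ℓ−1)·q new vertices, disjoint from V, and let H' be the ℓ-uniform hypergraph on V ∪ Z whose edges are: all ℓ-subsets of Z, and for each edge e ∈ E, all sets of the form e ∪ S with S ⊆ Z and |S| = ℓ − |e|. Then H admits a proper coloring with q colors (no monochromatic edge) if and only if H' does. -/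
/-- Converting a hypergraph with edges of size at most `l` into an `l`-uniform one by
adding `(l−1)·q` auxiliary vertices preserves proper `q`-colorability. -/
theorem stmt13 {V : Type*} [DecidableEq V] (l q : ℕ) (hl : 2 ≤ l) (hq : 2 ≤ q)
    (E : Set (Finset V)) (hE : ∀ e ∈ E, e.Nonempty ∧ e.card ≤ l) :
    let E' : Set (Finset (V ⊕ Fin ((l - 1) * q))) :=
      {e | e.card = l ∧ ∀ x ∈ e, ∃ z : Fin ((l - 1) * q), x = Sum.inr z} ∪
      {e' | ∃ e ∈ E, ∃ S : Finset (Fin ((l - 1) * q)), S.card = l - e.card ∧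
        e' = e.image Sum.inl ∪ S.image Sum.inr}
    (∃ c : V → Fin q, ∀ e ∈ E, ∃ u ∈ e, ∃ v ∈ e, c u ≠ c v) ↔
    (∃ c' : V ⊕ Fin ((l - 1) * q) → Fin q, ∀ e ∈ E', ∃ u ∈ e, ∃ v ∈ e, c' u ≠ c' v) := by
  intro E'
  have hl1 : 0 < l - 1 := by omega
  constructor
  · rintro ⟨c, hc⟩
    have hd : ∀ z : Fin ((l - 1) * q), (z : ℕ) / (l - 1) < q := by
      intro z
      rw [Nat.div_lt_iff_lt_mul hl1, mul_comm q (l - 1)]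
      exact z.isLt
    refine ⟨Sum.elim c (fun z => ⟨(z : ℕ) / (l - 1), hd z⟩), ?_⟩
    intro e' he'
    simp only [E', Set.mem_union, Set.mem_setOf_eq] at he'
    rcases he' with ⟨hcard, hz⟩ | ⟨e, he, S, hS, rfl⟩
    · by_contra h
      push_neg at h
      have hne : e'.Nonempty := by
        rw [← Finset.card_pos, hcard]; omega
      obtain ⟨x0, hx0⟩ := hne
      obtain ⟨z0, rfl⟩ := hz x0 hx0
      set k := (z0 : ℕ) / (l - 1) with hk
      have hsub : e' ⊆ (Finset.univ.filter
          fun z : Fin ((l - 1) * q) => (z : ℕ) / (l - 1) = k).image Sum.inr := by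
        intro x hx
        obtain ⟨z, rfl⟩ := hz x hx
        have hcc := h _ hx _ hx0
        simp only [Sum.elim_inr, Fin.mk.injEq] at hcc
        simp only [Finset.mem_image, Finset.mem_filter, Finset.mem_univ, true_and]
        exact ⟨z, hcc, rfl⟩
      have hc1 : ((Finset.univ.filter
          fun z : Fin ((l - 1) * q) => (z : ℕ) / (l - 1) = k)).card ≤ l - 1 := by
        have himg : (Finset.univ.filter
            fun z : Fin ((l - 1) * q) => (z : ℕ) / (l - 1) = k).image Fin.val
            ⊆ Finset.Ico (k * (l - 1)) (k * (l - 1) + (l - 1)) := by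
          intro n hn
          simp only [Finset.mem_image, Finset.mem_filter, Finset.mem_univ, true_and] at hn
          obtain ⟨z, hz', rfl⟩ := hn
          have h1 := Nat.div_add_mod (z : ℕ) (l - 1)
          have h2 := Nat.mod_lt (z : ℕ) hl1
          rw [hz'] at h1
          have h1' : k * (l - 1) + (z : ℕ) % (l - 1) = z := by
            rw [mul_comm k (l - 1)]; exact h1
          simp only [Finset.mem_Ico]
          constructor
          · calc k * (l - 1) ≤ k * (l - 1) + (z : ℕ) % (l - 1) := Nat.le_add_right _ _
              _ = z := h1'
          · calc (z : ℕ) = k * (l - 1) + (z : ℕ) % (l - 1) := h1'.symm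
              _ < k * (l - 1) + (l - 1) := Nat.add_lt_add_left h2 _
        have := Finset.card_le_card himg
        rw [Finset.card_image_of_injective _ Fin.val_injective, Nat.card_Ico] at this
        omega
      have := Finset.card_le_card hsub
      rw [hcard, Finset.card_image_of_injective _ Sum.inr_injective] at this
      omega
    · obtain ⟨u, hu, v, hv, huv⟩ := hc e he
      refine ⟨Sum.inl u, Finset.mem_union_left _ (Finset.mem_image_of_mem _ hu),
        Sum.inl v, Finset.mem_union_left _ (Finset.mem_image_of_mem _ hv), ?_⟩
      simpa using huv
  · rintro ⟨c', hc'⟩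
    refine ⟨fun v => c' (Sum.inl v), ?_⟩
    intro e he
    by_contra h
    push_neg at h
    obtain ⟨hne, hecard⟩ := hE e he
    obtain ⟨w0, hw0⟩ := hne
    set k := c' (Sum.inl w0) with hk
    set fib : Fin q → Finset (Fin ((l - 1) * q)) :=
      fun j => Finset.univ.filter fun z => c' (Sum.inr z) = j with hfib
    have hfible : ∀ j, (fib j).card ≤ l - 1 := by
      intro j
      by_contra hcon
      push_neg at hcon
      obtain ⟨T, hTsub, hTcard⟩ := Finset.exists_subset_card_eq (s := fib j) (n := l) (by omega)
      have hmem : T.image Sum.inr ∈ E' := by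
        apply Set.mem_union_left
        refine ⟨by rw [Finset.card_image_of_injective _ Sum.inr_injective]; exact hTcard, ?_⟩
        intro x hx
        obtain ⟨z, _, rfl⟩ := Finset.mem_image.1 hx
        exact ⟨z, rfl⟩
      obtain ⟨u, hu, v, hv, huv⟩ := hc' _ hmem
      obtain ⟨zu, hzu, rfl⟩ := Finset.mem_image.1 hu
      obtain ⟨zv, hzv, rfl⟩ := Finset.mem_image.1 hv
      have h1 := hTsub hzu
      have h2 := hTsub hzv
      simp only [hfib, Finset.mem_filter, Finset.mem_univ, true_and] at h1 h2
      exact huv (h1.trans h2.symm)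
    have hsum : ∑ j : Fin q, (fib j).card = (l - 1) * q := by
      have := Finset.card_eq_sum_card_fiberwise
        (f := fun z : Fin ((l - 1) * q) => c' (Sum.inr z)) (s := Finset.univ)
        (t := Finset.univ) (fun x _ => Finset.mem_univ _)
      simpa [hfib] using this.symm
    have hfibeq : (fib k).card = l - 1 := by
      by_contra hcon
      have hlt : (fib k).card < l - 1 := lt_of_le_of_ne (hfible k) hcon
      have hslt : ∑ j : Fin q, (fib j).card < ∑ _j : Fin q, (l - 1) :=
        Finset.sum_lt_sum (fun j _ => hfible j) ⟨k, Finset.mem_univ _, hlt⟩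
      rw [hsum, Finset.sum_const, Finset.card_univ, Fintype.card_fin, smul_eq_mul,
        mul_comm] at hslt
      exact lt_irrefl _ hslt
    have hecard1 : 1 ≤ e.card := Finset.card_pos.mpr ⟨w0, hw0⟩
    obtain ⟨S, hSsub, hScard⟩ := Finset.exists_subset_card_eq (s := fib k) (n := l - e.card)
      (by rw [hfibeq]; omega)
    have hmem : e.image Sum.inl ∪ S.image Sum.inr ∈ E' := by
      apply Set.mem_union_right
      exact ⟨e, he, S, hScard, rfl⟩
    obtain ⟨u, hu, v, hv, huv⟩ := hc' _ hmem
    have hcol : ∀ x ∈ e.image Sum.inl ∪ S.image Sum.inr, c' x = k := by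
      intro x hx
      rcases Finset.mem_union.1 hx with hx | hx
      · obtain ⟨w, hw, rfl⟩ := Finset.mem_image.1 hx
        exact h w hw w0 hw0
      · obtain ⟨z, hz, rfl⟩ := Finset.mem_image.1 hx
        have := hSsub hz
        simp only [hfib, Finset.mem_filter, Finset.mem_univ, true_and] at this
        exact this
    exact huv ((hcol u hu).trans (hcol v hv).symm)
end
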